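/- arXiv:1608.03080 — 2 statements merged into one kernel-verified Lean document; each statement's English description precedes it below -/
import Mathlib

section
/- Let x = [x_ε] be an element of the Robinson–Colombeau ring ρℝ̃. Then the following are equivalent: (i) x is invertible in ρℝ̃ and x ≥ 0; (ii) for each representative (x_ε) of x, x_ε > 0 for all sufficiently small ε; (iii) for each representative (x_ε) of x, there exists m ∈ ℕ such that x_ε > ρ_ε^m for all sufficiently small ε. -/
/-!
If `x` is invertible with inverse `y` and `x ≥ 0`, then `|x_ε y_ε - 1| ≤ 1/2` and `|y_ε| ≤ ρ_ε^{-N}`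
force `|x_ε| ≥ ρ_ε^N / 2`, and the negligible defect in `x ≥ 0` fixes the sign: `x_ε > ρ_ε^{N+1}`.
A bound `x_ε > ρ_ε^m` survives negligible perturbations, so every representative is eventually
positive, and it makes `1 / x_ε` a moderate inverse. Conversely, if a representative `x'` admits no
such bound, choose `ε_n → 0` with `x'_{ε_n} ≤ ρ_{ε_n}^n` and replace `x'_{ε_n}` by `min (x'_{ε_n}) 0`:
the change is negligible, yet the new representative is not eventually positive.
-/

open Filter Topology

/-- A gauge: a net of positive reals on (0,1] tending to 0 as ε → 0⁺. -/
def IsGauge (ρ : ℝ → ℝ) : Prop :=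
  (∀ ε ∈ Set.Ioc (0:ℝ) 1, 0 < ρ ε) ∧ Tendsto ρ (𝓝[>] (0:ℝ)) (𝓝 0)

/-- A net (x_ε) is ρ-moderate. -/
def Moderate (ρ x : ℝ → ℝ) : Prop :=
  ∃ a : ℝ, 0 < a ∧ ∃ C : ℝ, ∀ᶠ ε in 𝓝[>] (0:ℝ), |x ε| ≤ C * ρ ε ^ (-a)

/-- A net (z_ε) is ρ-negligible. -/
def Negligible (ρ z : ℝ → ℝ) : Prop :=
  ∀ a : ℝ, 0 < a → ∃ C : ℝ, ∀ᶠ ε in 𝓝[>] (0:ℝ), |z ε| ≤ C * ρ ε ^ a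

/-- Two moderate nets represent the same element of ρℝ̃. -/
def GEquiv (ρ x y : ℝ → ℝ) : Prop := Negligible ρ (x - y)

/-- The order on ρℝ̃ at the level of representatives: [x] ≤ [y] iff there is a
negligible net z with x_ε ≤ y_ε + z_ε for ε small. -/
def GLe (ρ x y : ℝ → ℝ) : Prop :=
  ∃ z : ℝ → ℝ, Negligible ρ z ∧ ∀ᶠ ε in 𝓝[>] (0:ℝ), x ε ≤ y ε + z ε

/-- [x] is invertible in ρℝ̃: there is a moderate net y with x·y ∼ 1. -/
def GInvertible (ρ x : ℝ → ℝ) : Prop :=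
  ∃ y : ℝ → ℝ, Moderate ρ y ∧ GEquiv ρ (x * y) 1

open Set

theorem Filter.exists_seq_tendsto_forall_of_frequently {α : Type*} {l : Filter α}
    [l.IsCountablyGenerated] {p : ℕ → α → Prop} (h : ∀ n, ∃ᶠ a in l, p n a) :
    ∃ u : ℕ → α, Tendsto u atTop l ∧ ∀ n, p n (u n) := by
  obtain ⟨s, hs⟩ := l.exists_antitone_basis
  choose u hu using fun n => ((h n).and_eventually (hs.mem n)).exists
  exact ⟨u, hs.tendsto fun n => (hu n).2, fun n => (hu n).1⟩

theorem abs_sub_le_abs_of_nonneg_of_le_max {α : Type*} [AddCommGroup α] [LinearOrder α]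
    [IsOrderedAddMonoid α] {a b : α} (hb : 0 ≤ b) (hba : b ≤ max a 0) :
    |a - b| ≤ |a| := by
  rcases le_total a 0 with ha | ha
  · rw [le_antisymm (hba.trans_eq (max_eq_right ha)) hb, sub_zero]
  · rw [max_eq_left ha] at hba
    rw [abs_of_nonneg (sub_nonneg.mpr hba), abs_of_nonneg ha]
    exact sub_le_self a hb

variable {ρ x y z w : ℝ → ℝ}

theorem IsGauge.eventually_pos_lt (hρ : IsGauge ρ) {δ : ℝ} (hδ : 0 < δ) :
    ∀ᶠ ε in 𝓝[>] (0:ℝ), 0 < ρ ε ∧ ρ ε < δ :=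
  Eventually.and (mem_of_superset (Ioc_mem_nhdsGT zero_lt_one) hρ.1) (hρ.2.eventually_lt_const hδ)

theorem negligible_of_eventually_eq_zero (h : ∀ᶠ ε in 𝓝[>] (0:ℝ), z ε = 0) : Negligible ρ z :=
  fun _ _ => ⟨0, h.mono fun ε hε => by simp [hε]⟩

theorem Negligible.add (hz : Negligible ρ z) (hw : Negligible ρ w) : Negligible ρ (z + w) := by
  intro a ha
  obtain ⟨C, hC⟩ := hz a ha
  obtain ⟨D, hD⟩ := hw a ha
  refine ⟨C + D, ?_⟩
  filter_upwards [hC, hD] with ε hzε hwε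
  calc |(z + w) ε| ≤ |z ε| + |w ε| := abs_add_le _ _
    _ ≤ (C + D) * ρ ε ^ a := by linarith

theorem Negligible.neg (hz : Negligible ρ z) : Negligible ρ (-z) :=
  fun a ha => (hz a ha).imp fun _ hC => hC.mono fun ε h => by simpa using h

theorem negligible_iff_forall_eventually_abs_le_pow (hρ : IsGauge ρ) :
    Negligible ρ z ↔ ∀ n : ℕ, ∀ᶠ ε in 𝓝[>] (0:ℝ), |z ε| ≤ ρ ε ^ n := by
  constructor
  · intro hz n
    obtain ⟨C, hC⟩ := hz (n + 1) (by positivity)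
    filter_upwards [hC, hρ.eventually_pos_lt (show (0:ℝ) < 1 / (|C| + 1) by positivity)]
      with ε hzε ⟨hpos, hsmall⟩
    have hCρ : C * ρ ε ≤ 1 := by
      rw [lt_div_iff₀ (by positivity)] at hsmall
      nlinarith [le_abs_self C]
    calc |z ε| ≤ C * ρ ε ^ ((n : ℝ) + 1) := hzε
      _ = C * ρ ε * ρ ε ^ n := by rw [Real.rpow_add_one hpos.ne', Real.rpow_natCast]; ring
      _ ≤ ρ ε ^ n := mul_le_of_le_one_left (by positivity) hCρ
  · intro h a _
    refine ⟨1, ?_⟩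
    filter_upwards [h ⌈a⌉₊, hρ.eventually_pos_lt one_pos] with ε hzε ⟨hpos, hlt⟩
    calc |z ε| ≤ ρ ε ^ (⌈a⌉₊ : ℝ) := by rwa [Real.rpow_natCast]
      _ ≤ 1 * ρ ε ^ a := by
        rw [one_mul]; exact Real.rpow_le_rpow_of_exponent_ge hpos hlt.le (Nat.le_ceil a)

theorem negligible_indicator_range_of_abs_le_pow (hρ : IsGauge ρ) {E : ℕ → ℝ}
    (hw : ∀ n, |w (E n)| ≤ ρ (E n) ^ n) : Negligible ρ ((range E).indicator w) := by
  refine (negligible_iff_forall_eventually_abs_le_pow hρ).mpr fun n => ?_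
  have hfar : ∀ᶠ ε in 𝓝[>] (0:ℝ), ε ∉ E '' Iio n :=
    (nhdsWithin_mono _ (by simp) |>.trans (nhdsNE_le_cofinite 0))
      ((finite_Iio n).image E).compl_mem_cofinite
  filter_upwards [hfar, hρ.eventually_pos_lt one_pos] with ε hε ⟨hpos, hlt⟩
  by_cases hmem : ε ∈ range E
  · obtain ⟨k, rfl⟩ := hmem
    have hnk : n ≤ k := not_lt.mp fun hk => hε ⟨k, hk, rfl⟩
    rw [indicator_of_mem (mem_range_self k)]
    exact (hw k).trans (pow_le_pow_of_le_one hpos.le hlt.le hnk)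
  · rw [indicator_of_notMem hmem, abs_zero]
    positivity

theorem moderate_iff_exists_eventually_abs_le_inv_pow (hρ : IsGauge ρ) :
    Moderate ρ x ↔ ∃ N : ℕ, ∀ᶠ ε in 𝓝[>] (0:ℝ), |x ε| ≤ (ρ ε ^ N)⁻¹ := by
  constructor
  · rintro ⟨a, -, C, hC⟩
    refine ⟨⌈a⌉₊ + 1, ?_⟩
    filter_upwards [hC, hρ.eventually_pos_lt (show (0:ℝ) < 1 / (|C| + 1) by positivity)]
      with ε hxε ⟨hpos, hsmall⟩
    rw [lt_div_iff₀ (by positivity)] at hsmall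
    have hCρ : |C| ≤ (ρ ε)⁻¹ := by
      rw [← one_div, le_div_iff₀ hpos]
      nlinarith
    have hlt : ρ ε ≤ 1 := by nlinarith [abs_nonneg C]
    calc |x ε| ≤ |C| * ρ ε ^ (-a) := hxε.trans (by gcongr; exact le_abs_self C)
      _ ≤ |C| * (ρ ε ^ ⌈a⌉₊)⁻¹ := by
        rw [Real.rpow_neg hpos.le, ← Real.rpow_natCast]
        exact mul_le_mul_of_nonneg_left (inv_anti₀ (by positivity)
          (Real.rpow_le_rpow_of_exponent_ge hpos hlt (Nat.le_ceil a))) (abs_nonneg C)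
      _ ≤ (ρ ε)⁻¹ * (ρ ε ^ ⌈a⌉₊)⁻¹ := by gcongr
      _ = (ρ ε ^ (⌈a⌉₊ + 1))⁻¹ := by rw [pow_succ, mul_inv, mul_comm]
  · rintro ⟨N, hN⟩
    refine ⟨N + 1, N.cast_add_one_pos, 1, ?_⟩
    filter_upwards [hN, hρ.eventually_pos_lt one_pos] with ε hxε ⟨hpos, hlt⟩
    calc |x ε| ≤ (ρ ε ^ N)⁻¹ := hxε
      _ ≤ (ρ ε ^ (N + 1))⁻¹ :=
        inv_anti₀ (by positivity) (pow_le_pow_of_le_one hpos.le hlt.le N.le_succ)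
      _ = 1 * ρ ε ^ (-((N : ℝ) + 1)) := by
        rw [one_mul, Real.rpow_neg hpos.le, ← Nat.cast_succ, Real.rpow_natCast]

theorem Moderate.mono (hx : Moderate ρ x) (h : ∀ ε, |y ε| ≤ |x ε|) : Moderate ρ y :=
  let ⟨a, ha, C, hC⟩ := hx
  ⟨a, ha, C, hC.mono fun ε hε => (h ε).trans hε⟩

theorem GEquiv.refl (ρ x : ℝ → ℝ) : GEquiv ρ x x :=
  negligible_of_eventually_eq_zero (by simp)

theorem GEquiv.trans (hxy : GEquiv ρ x y) (hyz : GEquiv ρ y z) : GEquiv ρ x z := by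
  have h := Negligible.add hxy hyz
  rwa [sub_add_sub_cancel] at h

theorem exists_eventually_pow_lt_of_ginvertible_of_gle (hρ : IsGauge ρ)
    (hinv : GInvertible ρ x) (hle : GLe ρ 0 x) :
    ∃ m : ℕ, ∀ᶠ ε in 𝓝[>] (0:ℝ), ρ ε ^ m < x ε := by
  obtain ⟨y, hy, hxy⟩ := hinv
  obtain ⟨N, hyN⟩ := (moderate_iff_exists_eventually_abs_le_inv_pow hρ).mp hy
  obtain ⟨z, hz, hxz⟩ := hle
  refine ⟨N + 1, ?_⟩
  filter_upwards [hyN, (negligible_iff_forall_eventually_abs_le_pow hρ).mp hxy 1,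
    (negligible_iff_forall_eventually_abs_le_pow hρ).mp hz (N + 2), hxz,
    hρ.eventually_pos_lt one_half_pos] with ε hyε hxyε hzε hxzε ⟨hpos, hsmall⟩
  set P := ρ ε ^ N
  have hP : 0 < P := by positivity
  have hprod : 1 / 2 ≤ |x ε| * |y ε| := by
    simp only [Pi.sub_apply, Pi.mul_apply, Pi.one_apply, pow_one] at hxyε
    rw [← abs_mul]
    linarith [(abs_le.mp hxyε).1, le_abs_self (x ε * y ε)]
  have habs : 1 / 2 * P ≤ |x ε| := by
    have := hprod.trans (mul_le_mul_of_nonneg_left hyε (abs_nonneg _))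
    rwa [← div_eq_mul_inv, le_div_iff₀ hP] at this
  have hz_small : z ε < 1 / 2 * P :=
    calc z ε ≤ ρ ε ^ (N + 2) := (le_abs_self _).trans hzε
      _ = P * ρ ε ^ 2 := pow_add _ _ _
      _ < P * (1 / 2) := mul_lt_mul_of_pos_left (by nlinarith) hP
      _ = 1 / 2 * P := mul_comm _ _
  have hx_nonneg : 0 ≤ x ε := by
    by_contra! hneg
    rw [abs_of_neg hneg] at habs
    simp only [Pi.zero_apply] at hxzε
    linarith
  calc ρ ε ^ (N + 1) = P * ρ ε := pow_succ _ _
    _ < P * (1 / 2) := mul_lt_mul_of_pos_left hsmall hP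
    _ ≤ x ε := by rw [← abs_of_nonneg hx_nonneg]; linarith

theorem eventually_pos_of_gequiv_of_eventually_pow_lt (hρ : IsGauge ρ) {m : ℕ}
    (hx : ∀ᶠ ε in 𝓝[>] (0:ℝ), ρ ε ^ m < x ε) (hyx : GEquiv ρ y x) :
    ∀ᶠ ε in 𝓝[>] (0:ℝ), 0 < y ε := by
  filter_upwards [hx, (negligible_iff_forall_eventually_abs_le_pow hρ).mp hyx (m + 1),
    hρ.eventually_pos_lt one_pos] with ε hxε hyxε ⟨hpos, hlt⟩
  have hpow : ρ ε ^ (m + 1) ≤ ρ ε ^ m := pow_le_pow_of_le_one hpos.le hlt.le m.le_succ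
  have hclose := (abs_le.mp hyxε).1
  rw [Pi.sub_apply] at hclose
  linarith

theorem ginvertible_and_gle_of_eventually_pow_lt (hρ : IsGauge ρ) {m : ℕ}
    (hx : ∀ᶠ ε in 𝓝[>] (0:ℝ), ρ ε ^ m < x ε) : GInvertible ρ x ∧ GLe ρ 0 x := by
  have hxpos := eventually_pos_of_gequiv_of_eventually_pow_lt hρ hx (.refl ρ x)
  refine ⟨⟨x⁻¹, (moderate_iff_exists_eventually_abs_le_inv_pow hρ).mpr ⟨m, ?_⟩,
    negligible_of_eventually_eq_zero ?_⟩, ⟨0, negligible_of_eventually_eq_zero (by simp), ?_⟩⟩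
  · filter_upwards [hx, hρ.eventually_pos_lt one_pos] with ε hxε ⟨hpos, _⟩
    rw [Pi.inv_apply, abs_inv, abs_of_pos ((pow_pos hpos m).trans hxε)]
    exact inv_anti₀ (pow_pos hpos m) hxε.le
  · filter_upwards [hxpos] with ε hε
    simp [hε.ne']
  · filter_upwards [hxpos] with ε hε
    simpa using hε.le

theorem exists_gequiv_not_eventually_pos (hρ : IsGauge ρ) (hx : Moderate ρ x)
    (h : ¬ ∃ m : ℕ, ∀ᶠ ε in 𝓝[>] (0:ℝ), ρ ε ^ m < x ε) :
    ∃ y, Moderate ρ y ∧ GEquiv ρ y x ∧ ¬ ∀ᶠ ε in 𝓝[>] (0:ℝ), 0 < y ε := by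
  have hfreq : ∀ m : ℕ, ∃ᶠ ε in 𝓝[>] (0:ℝ), x ε ≤ ρ ε ^ m ∧ 0 < ρ ε := fun m =>
    ((not_eventually.mp (not_exists.mp h m)).and_eventually
      (hρ.eventually_pos_lt one_pos)).mono fun ε hε => ⟨not_lt.mp hε.1, hε.2.1⟩
  obtain ⟨E, hE, hxE⟩ := exists_seq_tendsto_forall_of_frequently hfreq
  set w := (range E).indicator fun ε => max (x ε) 0
  have hw_nonneg : ∀ ε, 0 ≤ w ε := fun ε => indicator_nonneg (fun _ _ => le_max_right _ _) ε
  have hw_le : ∀ ε, w ε ≤ max (x ε) 0 := fun ε => indicator_le_self' (fun _ _ => le_max_right _ _) ε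
  refine ⟨x - w, hx.mono fun ε => ?_, ?_, fun hpos => ?_⟩
  · exact abs_sub_le_abs_of_nonneg_of_le_max (hw_nonneg ε) (hw_le ε)
  · have hw : Negligible ρ w := negligible_indicator_range_of_abs_le_pow hρ fun n => by
      rw [abs_of_nonneg (le_max_right _ _)]
      exact max_le (hxE n).1 (pow_nonneg (hxE n).2.le n)
    unfold GEquiv
    rw [sub_sub_cancel_left]
    exact hw.neg
  · obtain ⟨n, hn⟩ := (hE.eventually hpos).exists
    have : w (E n) = max (x (E n)) 0 := indicator_of_mem (mem_range_self n) _
    rw [Pi.sub_apply, this] at hn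
    linarith [le_max_left (x (E n)) 0]

/-- Lemma (Mayer): for x ∈ ρℝ̃ the following are equivalent:
(i) x is invertible and x ≥ 0;
(ii) every representative is eventually strictly positive;
(iii) every representative eventually exceeds ρ_ε^m for some m ∈ ℕ. -/
theorem mayer_positivity (ρ : ℝ → ℝ) (hρ : IsGauge ρ) (x : ℝ → ℝ)
    (hx : Moderate ρ x) :
    ((GInvertible ρ x ∧ GLe ρ 0 x) ↔
      (∀ x' : ℝ → ℝ, Moderate ρ x' → GEquiv ρ x' x →
        ∀ᶠ ε in 𝓝[>] (0:ℝ), 0 < x' ε)) ∧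
    ((∀ x' : ℝ → ℝ, Moderate ρ x' → GEquiv ρ x' x →
        ∀ᶠ ε in 𝓝[>] (0:ℝ), 0 < x' ε) ↔
      (∀ x' : ℝ → ℝ, Moderate ρ x' → GEquiv ρ x' x →
        ∃ m : ℕ, ∀ᶠ ε in 𝓝[>] (0:ℝ), ρ ε ^ m < x' ε)) := by
  have pow_lt_of_pos : (∀ x' : ℝ → ℝ, Moderate ρ x' → GEquiv ρ x' x →
      ∀ᶠ ε in 𝓝[>] (0:ℝ), 0 < x' ε) → ∀ x' : ℝ → ℝ, Moderate ρ x' → GEquiv ρ x' x →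
      ∃ m : ℕ, ∀ᶠ ε in 𝓝[>] (0:ℝ), ρ ε ^ m < x' ε := by
    intro hpos x' hx' hx'x
    by_contra hnot
    obtain ⟨y, hy, hyx', hy_not⟩ := exists_gequiv_not_eventually_pos hρ hx' hnot
    exact hy_not (hpos y hy (hyx'.trans hx'x))
  refine ⟨⟨fun ⟨hinv, hle⟩ x' _ hx'x => ?_, fun hpos => ?_⟩, pow_lt_of_pos,
    fun hpow x' hx' hx'x => ?_⟩
  · obtain ⟨m, hm⟩ := exists_eventually_pow_lt_of_ginvertible_of_gle hρ hinv hle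
    exact eventually_pos_of_gequiv_of_eventually_pow_lt hρ hm hx'x
  · obtain ⟨m, hm⟩ := pow_lt_of_pos hpos x hx (.refl ρ x)
    exact ginvertible_and_gle_of_eventually_pow_lt hρ hm
  · obtain ⟨m, hm⟩ := hpow x' hx' hx'x
    exact eventually_pos_of_gequiv_of_eventually_pow_lt hρ hm (.refl ρ x')
end

section
/- (Noether's theorem, time-independent form.) Let K : L × V → ℝ be smooth, where L, V ⊆ ℝ^n are open, and let w : (a,b) → L be smooth with ẇ(t) ∈ V solving the Euler–Lagrange equation K_u(w, ẇ) = d/dt K_{u̇}(w, ẇ). Let (X_s)_{s ∈ J} be a smooth family of maps X : J × L → L with 0 an interior point of J, such that for all t ∈ (a,b): ∂/∂t X_s(w(t)) ∈ V, X_0(w(t)) = w(t), and K(w(t), ẇ(t)) = K(X_s(w(t)), ∂/∂t X_s(w(t))) for all s ∈ J. Then the quantity t ↦ K_{u̇}(w(t), ẇ(t)) · ∂/∂s|_{s=0} X_s(w(t)) is constant on (a,b). -/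
/-!
Write `G(s, t) = X_s(w(t))`. Differentiating the invariance `K(w, ẇ) = K(G, ∂ₜG)` in `s` at
`s = 0` gives `⟪K_u, ∂ₛG⟫ + ⟪K_u̇, ∂ₛ∂ₜG⟫ = 0`. The Euler–Lagrange equation replaces `K_u` by
`d/dt K_u̇`, and since `∂ₛ∂ₜG = ∂ₜ∂ₛG` the left side becomes the product rule for
`d/dt ⟪K_u̇, ∂ₛG⟫`, which therefore vanishes on the interval.
-/

open ContinuousLinearMap InnerProductSpace Filter Topology

section PartialGradients

variable {E F : Type*} [NormedAddCommGroup E] [NormedAddCommGroup F]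

theorem HasFDerivAt.gradient_fst_eq [InnerProductSpace ℝ E] [CompleteSpace E] [NormedSpace ℝ F]
    {K : E → F → ℝ} {K' : E × F →L[ℝ] ℝ} {x : E} {v : F}
    (hK : HasFDerivAt (fun p : E × F => K p.1 p.2) K' (x, v)) :
    gradient (fun y => K y v) x = (toDual ℝ E).symm (K'.comp (inl ℝ E F)) := by
  have hpartial : HasFDerivAt (fun y => K y v) (K'.comp (inl ℝ E F)) x :=
    HasFDerivAt.comp (f := fun y => (y, v)) x hK (hasFDerivAt_prodMk_left x v)
  rw [gradient, hpartial.fderiv]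

theorem HasFDerivAt.gradient_snd_eq [NormedSpace ℝ E] [InnerProductSpace ℝ F] [CompleteSpace F]
    {K : E → F → ℝ} {K' : E × F →L[ℝ] ℝ} {x : E} {v : F}
    (hK : HasFDerivAt (fun p : E × F => K p.1 p.2) K' (x, v)) :
    gradient (K x) v = (toDual ℝ F).symm (K'.comp (inr ℝ E F)) := by
  have hpartial : HasFDerivAt (K x) (K'.comp (inr ℝ E F)) v :=
    HasFDerivAt.comp (f := fun η => (x, η)) v hK (hasFDerivAt_prodMk_right x v)
  rw [gradient, hpartial.fderiv]

theorem HasFDerivAt.apply_eq_inner_gradient_add [InnerProductSpace ℝ E] [CompleteSpace E]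
    [InnerProductSpace ℝ F] [CompleteSpace F]
    {K : E → F → ℝ} {K' : E × F →L[ℝ] ℝ} {x : E} {v : F}
    (hK : HasFDerivAt (fun p : E × F => K p.1 p.2) K' (x, v)) (ξ : E) (η : F) :
    K' (ξ, η) = ⟪gradient (fun y => K y v) x, ξ⟫_ℝ + ⟪gradient (K x) v, η⟫_ℝ := by
  rw [hK.gradient_fst_eq, hK.gradient_snd_eq, toDual_symm_apply, toDual_symm_apply,
    ← Prod.fst_add_snd (ξ, η), map_add]
  rfl

theorem ContDiffOn.gradient_snd_of_isOpen [NormedSpace ℝ E] [InnerProductSpace ℝ F]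
    [CompleteSpace F] {K : E → F → ℝ} {s : Set (E × F)} {m n : WithTop ℕ∞}
    (hK : ContDiffOn ℝ n (fun p : E × F => K p.1 p.2) s) (hs : IsOpen s) (hmn : m + 1 ≤ n) :
    ContDiffOn ℝ m (fun p : E × F => gradient (K p.1) p.2) s := by
  let restrict : (E × F →L[ℝ] ℝ) →L[ℝ] F :=
    (toDual ℝ F).symm.toLinearIsometry.toContinuousLinearMap.comp
      ((compL ℝ F (E × F) ℝ).flip (inr ℝ E F))
  refine (restrict.contDiff.comp_contDiffOn (hK.fderiv_of_isOpen hs hmn)).congr fun p hp => ?_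
  have hdiff : DifferentiableAt ℝ (fun p : E × F => K p.1 p.2) p :=
    (hK.contDiffAt (hs.mem_nhds hp)).differentiableAt (by rintro rfl; simp at hmn)
  exact hdiff.hasFDerivAt.gradient_snd_eq

end PartialGradients

section MixedPartials

variable {E : Type*} [NormedAddCommGroup E] [NormedSpace ℝ E] {G : ℝ × ℝ → E} {s t : ℝ}

theorem DifferentiableAt.deriv_partial_fst (hG : DifferentiableAt ℝ G (s, t)) :
    deriv (fun σ => G (σ, t)) s = fderiv ℝ G (s, t) (1, 0) :=
  (hG.hasFDerivAt.comp_hasDerivAt s ((hasDerivAt_id' s).prodMk (hasDerivAt_const s t))).deriv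

theorem DifferentiableAt.deriv_partial_snd (hG : DifferentiableAt ℝ G (s, t)) :
    deriv (fun τ => G (s, τ)) t = fderiv ℝ G (s, t) (0, 1) :=
  (hG.hasFDerivAt.comp_hasDerivAt t ((hasDerivAt_const t s).prodMk (hasDerivAt_id' t))).deriv

theorem ContDiffAt.exists_hasDerivAt_mixed_partials (hG : ContDiffAt ℝ 2 G (s, t)) :
    ∃ c : E, HasDerivAt (fun τ => deriv (fun σ => G (σ, τ)) s) c t ∧
      HasDerivAt (fun σ => deriv (fun τ => G (σ, τ)) t) c s := by
  have hdiff : ∀ᶠ q in 𝓝 (s, t), DifferentiableAt ℝ G q :=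
    (hG.eventually (by simp)).mono fun q hq => hq.differentiableAt two_ne_zero
  have hD : HasFDerivAt (fderiv ℝ G) (fderiv ℝ (fderiv ℝ G) (s, t)) (s, t) :=
    ((hG.fderiv_right (m := 1) (by norm_num)).differentiableAt one_ne_zero).hasFDerivAt
  have hsymm := hG.isSymmSndFDerivAt (by simp) (1, 0) (0, 1)
  refine ⟨fderiv ℝ (fderiv ℝ G) (s, t) (0, 1) (1, 0), ?_, ?_⟩
  · have hline : HasDerivAt (fun τ => fderiv ℝ G (s, τ) (1, 0))
        (fderiv ℝ (fderiv ℝ G) (s, t) (0, 1) (1, 0)) t :=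
      ((apply ℝ E ((1, 0) : ℝ × ℝ)).hasFDerivAt.comp (s, t) hD).comp_hasDerivAt t
        ((hasDerivAt_const t s).prodMk (hasDerivAt_id' t))
    refine hline.congr_of_eventuallyEq ?_
    have hnear : ∀ᶠ τ in 𝓝 t, DifferentiableAt ℝ G (s, τ) :=
      (continuous_const.prodMk continuous_id).continuousAt.eventually hdiff
    exact hnear.mono fun τ hτ => hτ.deriv_partial_fst
  · have hline : HasDerivAt (fun σ => fderiv ℝ G (σ, t) (0, 1))
        (fderiv ℝ (fderiv ℝ G) (s, t) (1, 0) (0, 1)) s :=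
      ((apply ℝ E ((0, 1) : ℝ × ℝ)).hasFDerivAt.comp (s, t) hD).comp_hasDerivAt
        (f := fun σ => (σ, t)) s ((hasDerivAt_id' s).prodMk (hasDerivAt_const s t))
    rw [← hsymm]
    refine hline.congr_of_eventuallyEq ?_
    have hnear : ∀ᶠ σ in 𝓝 s, DifferentiableAt ℝ G (σ, t) :=
      (continuous_id.prodMk continuous_const).continuousAt.eventually hdiff
    exact hnear.mono fun σ hσ => hσ.deriv_partial_snd

end MixedPartials

section Noether

variable {E : Type*} [NormedAddCommGroup E] [InnerProductSpace ℝ E] [CompleteSpace E]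

theorem inner_gradient_add_inner_gradient_eq_zero_of_eventuallyEq {F : Type*}
    [NormedAddCommGroup F] [InnerProductSpace ℝ F] [CompleteSpace F]
    {K : E → F → ℝ} {x : E} {v : F} {γ : ℝ → E} {ν : ℝ → F} {ξ : E} {η : F} {s₀ : ℝ}
    (hK : DifferentiableAt ℝ (fun p : E × F => K p.1 p.2) (x, v))
    (hγ : HasDerivAt γ ξ s₀) (hν : HasDerivAt ν η s₀) (hγ₀ : γ s₀ = x) (hν₀ : ν s₀ = v)
    (hconst : ∀ᶠ s in 𝓝 s₀, K (γ s) (ν s) = K x v) :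
    ⟪gradient (fun y => K y v) x, ξ⟫_ℝ + ⟪gradient (K x) v, η⟫_ℝ = 0 := by
  subst hγ₀ hν₀
  have hchain := hK.hasFDerivAt.comp_hasDerivAt s₀ (hγ.prodMk hν)
  rw [← hK.hasFDerivAt.apply_eq_inner_gradient_add,
    hchain.unique ((hasDerivAt_const s₀ _).congr_of_eventuallyEq hconst)]

noncomputable def noetherCharge (K : E → E → ℝ) (w : ℝ → E) (G : ℝ × ℝ → E) (t : ℝ) : ℝ :=
  ⟪gradient (K (w t)) (deriv w t), deriv (fun s => G (s, t)) 0⟫_ℝ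

theorem hasDerivAt_noetherCharge {K : E → E → ℝ} {w : ℝ → E} {G : ℝ × ℝ → E} {t : ℝ}
    (hK : DifferentiableAt ℝ (fun p : E × E => K p.1 p.2) (w t, deriv w t))
    (hgrad : DifferentiableAt ℝ (fun τ => gradient (K (w τ)) (deriv w τ)) t)
    (hEL : gradient (fun y => K y (deriv w t)) (w t)
      = deriv (fun τ => gradient (K (w τ)) (deriv w τ)) t)
    (hG : ContDiffAt ℝ 2 G (0, t)) (hG₀ : (fun τ => G (0, τ)) =ᶠ[𝓝 t] w)
    (hinv : ∀ᶠ s in 𝓝 0, K (G (s, t)) (deriv (fun τ => G (s, τ)) t) = K (w t) (deriv w t)) :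
    HasDerivAt (noetherCharge K w G) 0 t := by
  obtain ⟨c, hc_t, hc_s⟩ := hG.exists_hasDerivAt_mixed_partials
  have hξ : HasDerivAt (fun s => G (s, t)) (deriv (fun s => G (s, t)) 0) 0 :=
    ((hG.differentiableAt two_ne_zero).comp (0 : ℝ)
      (differentiableAt_id.prodMk (differentiableAt_const t))).hasDerivAt
  have hfirst := inner_gradient_add_inner_gradient_eq_zero_of_eventuallyEq hK hξ hc_s
    hG₀.eq_of_nhds hG₀.deriv_eq hinv
  have hprod := hgrad.hasDerivAt.inner ℝ hc_t
  rwa [← hEL, add_comm, hfirst] at hprod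

end Noether

theorem noether_time_independent_general (n : ℕ) (a b : ℝ)
    (L V : Set (EuclideanSpace ℝ (Fin n))) (hL : IsOpen L) (hV : IsOpen V)
    (K : EuclideanSpace ℝ (Fin n) → EuclideanSpace ℝ (Fin n) → ℝ)
    (hK : ContDiffOn ℝ (⊤ : ℕ∞)
      (fun p : EuclideanSpace ℝ (Fin n) × EuclideanSpace ℝ (Fin n) =>
        K p.1 p.2) (L ×ˢ V))
    (w : ℝ → EuclideanSpace ℝ (Fin n))
    (hw : ContDiffOn ℝ (⊤ : ℕ∞) w (Set.Ioo a b))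
    (hwL : ∀ t ∈ Set.Ioo a b, w t ∈ L)
    (hwV : ∀ t ∈ Set.Ioo a b, deriv w t ∈ V)
    (hEL : ∀ t ∈ Set.Ioo a b,
      gradient (fun y => K y (deriv w t)) (w t)
        = deriv (fun τ => gradient (fun v => K (w τ) v) (deriv w τ)) t)
    (J : Set ℝ) (hJ : J ∈ nhds (0:ℝ))
    (X : ℝ → EuclideanSpace ℝ (Fin n) → EuclideanSpace ℝ (Fin n))
    (hX : ContDiffOn ℝ (⊤ : ℕ∞)
      (fun p : ℝ × EuclideanSpace ℝ (Fin n) => X p.1 p.2) (J ×ˢ L))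
    (hX0 : ∀ t ∈ Set.Ioo a b, X 0 (w t) = w t)
    (hinv : ∀ s ∈ J, ∀ t ∈ Set.Ioo a b,
      K (w t) (deriv w t) = K (X s (w t)) (deriv (fun τ => X s (w τ)) t)) :
    ∃ c : ℝ, ∀ t ∈ Set.Ioo a b,
      (inner ℝ (gradient (fun v => K (w t) v) (deriv w t))
        (deriv (fun s => X s (w t)) 0) : ℝ) = c := by
  set G : ℝ × ℝ → EuclideanSpace ℝ (Fin n) := fun p => X p.1 (w p.2)
  have hLV : IsOpen (L ×ˢ V) := hL.prod hV
  have hG : ContDiffOn ℝ (⊤ : ℕ∞) G (J ×ˢ Set.Ioo a b) :=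
    hX.comp (contDiffOn_fst.prodMk (hw.comp contDiffOn_snd fun p hp => hp.2))
      fun p hp => ⟨hp.1, hwL p.2 hp.2⟩
  have hgrad : ContDiffOn ℝ 1 (fun p => gradient (K p.1) p.2) (L ×ˢ V) :=
    hK.gradient_snd_of_isOpen hLV (WithTop.coe_le_coe.mpr le_top)
  have hw' : ContDiffOn ℝ 1 (deriv w) (Set.Ioo a b) :=
    hw.deriv_of_isOpen isOpen_Ioo (WithTop.coe_le_coe.mpr le_top)
  have hcharge : ∀ t ∈ Set.Ioo a b, HasDerivAt (noetherCharge K w G) 0 t := by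
    intro t ht
    have hwt : Set.Ioo a b ∈ 𝓝 t := isOpen_Ioo.mem_nhds ht
    have hKt : L ×ˢ V ∈ 𝓝 (w t, deriv w t) := hLV.mem_nhds ⟨hwL t ht, hwV t ht⟩
    have hgrad_t := ((hgrad.contDiffAt hKt).differentiableAt one_ne_zero).comp t
      (((hw.contDiffAt hwt).differentiableAt (by simp)).prodMk
        ((hw'.contDiffAt hwt).differentiableAt one_ne_zero))
    refine hasDerivAt_noetherCharge ((hK.contDiffAt hKt).differentiableAt (by simp)) hgrad_t
      (hEL t ht) ((hG.contDiffAt (prod_mem_nhds hJ hwt)).of_le (WithTop.coe_le_coe.mpr le_top))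
      (eventually_of_mem hwt hX0) (eventually_of_mem hJ fun s hs => (hinv s hs t ht).symm)
  refine ⟨noetherCharge K w G ((a + b) / 2), fun t ht => ?_⟩
  have hmid : (a + b) / 2 ∈ Set.Ioo a b := ⟨by linarith [ht.1, ht.2], by linarith [ht.1, ht.2]⟩
  exact isOpen_Ioo.is_const_of_deriv_eq_zero isPreconnected_Ioo
    (fun τ hτ => (hcharge τ hτ).differentiableAt.differentiableWithinAt)
    (fun τ hτ => (hcharge τ hτ).deriv) ht hmid

/-- Noether's theorem, time-independent form: if w solves the Euler–Lagrange
equation for K on (a,b) and (X_s) is a smooth family of maps of L with X₀ = id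
along w, ∂/∂t X_s(w(t)) ∈ V, and K invariant under (X_s) along w, then
t ↦ K_u̇(w,ẇ) · ∂/∂s|₀ X_s(w(t)) is constant on (a,b). -/
theorem noether_time_independent (n : ℕ) (a b : ℝ) (hab : a < b)
    (L V : Set (EuclideanSpace ℝ (Fin n))) (hL : IsOpen L) (hV : IsOpen V)
    (K : EuclideanSpace ℝ (Fin n) → EuclideanSpace ℝ (Fin n) → ℝ)
    (hK : ContDiffOn ℝ (⊤ : ℕ∞)
      (fun p : EuclideanSpace ℝ (Fin n) × EuclideanSpace ℝ (Fin n) =>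
        K p.1 p.2) (L ×ˢ V))
    (w : ℝ → EuclideanSpace ℝ (Fin n))
    (hw : ContDiffOn ℝ (⊤ : ℕ∞) w (Set.Ioo a b))
    (hwL : ∀ t ∈ Set.Ioo a b, w t ∈ L)
    (hwV : ∀ t ∈ Set.Ioo a b, deriv w t ∈ V)
    (hEL : ∀ t ∈ Set.Ioo a b,
      gradient (fun y => K y (deriv w t)) (w t)
        = deriv (fun τ => gradient (fun v => K (w τ) v) (deriv w τ)) t)
    (J : Set ℝ) (hJ : J ∈ nhds (0:ℝ))
    (X : ℝ → EuclideanSpace ℝ (Fin n) → EuclideanSpace ℝ (Fin n))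
    (hX : ContDiffOn ℝ (⊤ : ℕ∞)
      (fun p : ℝ × EuclideanSpace ℝ (Fin n) => X p.1 p.2) (J ×ˢ L))
    (hXL : ∀ s ∈ J, ∀ x ∈ L, X s x ∈ L)
    (hXV : ∀ s ∈ J, ∀ t ∈ Set.Ioo a b, deriv (fun τ => X s (w τ)) t ∈ V)
    (hX0 : ∀ t ∈ Set.Ioo a b, X 0 (w t) = w t)
    (hinv : ∀ s ∈ J, ∀ t ∈ Set.Ioo a b,
      K (w t) (deriv w t) = K (X s (w t)) (deriv (fun τ => X s (w τ)) t)) :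
    ∃ c : ℝ, ∀ t ∈ Set.Ioo a b,
      (inner ℝ (gradient (fun v => K (w t) v) (deriv w t))
        (deriv (fun s => X s (w t)) 0) : ℝ) = c :=
  noether_time_independent_general n a b L V hL hV K hK w hw hwL hwV hEL J hJ X hX hX0 hinv
end
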